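/- arXiv:2504.10314 — 4 statements merged into one kernel-verified Lean document; each statement's English description precedes it below -/
import Mathlib

section
/- Let V be a symmetric monoidal closed, cocomplete category and let a¹, …, aⁿ be objects of the arrow category [→,V] (so each aⁱ is an arrow aⁱ_⋄ : aⁱ_0 → aⁱ_1 in V). Form the left-bracketed iterated funny tensor □_{i=1}^n aⁱ := (…(a¹□a²)□…)□aⁿ. Then there exist morphisms k_1, …, k_n with k_j : ⊗_{i=1}^n aⁱ_{δ_{i,j}} → (□_{i=1}^n aⁱ)_1 (where δ_{i,j} = 1 if i = j and 0 otherwise, and all tensors are bracketed to the left) exhibiting (□_{i=1}^n aⁱ)_1 as a wide pushout of the n morphisms ⊗_{i=1}^n aⁱ_0 → ⊗_{i=1}^n aⁱ_{δ_{i,j}} given by tensoring aʲ_⋄ in the j-th position with identities elsewhere; moreover, for every j, the arrow component (□_{i=1}^n aⁱ)_⋄ : ⊗_{i=1}^n aⁱ_0 → (□_{i=1}^n aⁱ)_1 equals k_j composed with the j-th of these morphisms. -/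
open CategoryTheory Category Limits MonoidalCategory

universe v u
variable {V : Type u} [Category.{v} V] [MonoidalCategory V] [SymmetricCategory V]
  [MonoidalClosed V] [HasColimits V]

/-- The funny tensor of two objects of the arrow category `[→,V]`: the diagonal of the
pushout of `a₀ ◁ b_⋄ : a₀ ⊗ b₀ ⟶ a₀ ⊗ b₁` and `a_⋄ ▷ b₀ : a₀ ⊗ b₀ ⟶ a₁ ⊗ b₀`. -/
noncomputable def funny (a b : Arrow V) : Arrow V :=
  Arrow.mk ((a.left ◁ b.hom) ≫ pushout.inl (a.left ◁ b.hom) (a.hom ▷ b.left))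

/-- Left-bracketed iterated tensor product `(…(x¹ ⊗ x²) ⊗ …) ⊗ xⁿ` in `V`. -/
def iteratedTensor : (n : ℕ) → (Fin (n + 1) → V) → V
  | 0, x => x 0
  | n + 1, x => MonoidalCategory.tensorObj (iteratedTensor n (fun i => x i.castSucc))
      (x (Fin.last (n + 1)))

/-- Functorial action of the left-bracketed iterated tensor on families of morphisms. -/
def iteratedTensorHom : (n : ℕ) → {x y : Fin (n + 1) → V} → (∀ i, x i ⟶ y i) →
    (iteratedTensor n x ⟶ iteratedTensor n y)
  | 0, _, _, f => f 0
  | n + 1, _, _, f => MonoidalCategory.tensorHom (iteratedTensorHom n (fun i => f i.castSucc))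
      (f (Fin.last (n + 1)))

/-- Left-bracketed iterated funny tensor `(…(a¹ □ a²) □ …) □ aⁿ` in `[→,V]`. -/
noncomputable def iterFunny : (n : ℕ) → (Fin (n + 1) → Arrow V) → Arrow V
  | 0, a => a 0
  | n + 1, a => funny (iterFunny n (fun i => a i.castSucc)) (a (Fin.last (n + 1)))

theorem iterFunny_left : ∀ (n : ℕ) (a : Fin (n + 1) → Arrow V),
    (iterFunny n a).left = iteratedTensor n (fun i => (a i).left)
  | 0, _ => rfl
  | n + 1, a => by
      show MonoidalCategory.tensorObj (iterFunny n (fun i => a i.castSucc)).left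
          ((a (Fin.last (n + 1))).left) = _
      rw [iterFunny_left n]
      rfl

/-- The object `⊗_{i=1}^n aⁱ_{δ_{i,j}}`: the `j`-th component is `aʲ₁`, the others are `aⁱ₀`. -/
def deltaObj (a : Fin m → Arrow V) (j i : Fin m) : V :=
  if i = j then (a i).right else (a i).left

/-- The morphism `aⁱ₀ ⟶ (deltaObj a j) i`: it is `aʲ_⋄` when `i = j` and the identity
otherwise. -/
noncomputable def deltaHom (a : Fin m → Arrow V) (j i : Fin m) : (a i).left ⟶ deltaObj a j i :=
  if h : i = j then (a i).hom ≫ eqToHom (by simp [deltaObj, h])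
  else eqToHom (by simp [deltaObj, h])


section Helpers
variable {V : Type u} [Category.{v} V] [MonoidalCategory V]

theorem ith_id (n : ℕ) (x : Fin (n+1) → V) :
    iteratedTensorHom n (fun i => 𝟙 (x i)) = 𝟙 (iteratedTensor n x) := by
  induction n with
  | zero => rfl
  | succ n ih =>
    show MonoidalCategory.tensorHom (iteratedTensorHom n (fun i => 𝟙 (x i.castSucc)))
        (𝟙 (x (Fin.last (n+1)))) = _
    rw [ih (fun i => x i.castSucc)]
    exact MonoidalCategory.id_tensorHom_id _ _

theorem ith_congr (n : ℕ) {x y y' : Fin (n+1) → V} (f : ∀ i, x i ⟶ y i)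
    (f' : ∀ i, x i ⟶ y' i) (e : ∀ i, y i = y' i) (h : ∀ i, f' i = f i ≫ eqToHom (e i)) :
    iteratedTensorHom n f' = iteratedTensorHom n f
      ≫ eqToHom (congrArg (iteratedTensor n) (funext e)) := by
  have hy : y = y' := funext e
  subst hy
  have hf : f' = f := funext fun i => by rw [h i]; simp
  subst hf
  simp

theorem tensorHom_eqToHom_eqToHom {A A' B B' : V} (e1 : A = A') (e2 : B = B') :
    MonoidalCategory.tensorHom (eqToHom e1) (eqToHom e2) = eqToHom (by rw [e1, e2]) := by
  subst e1; subst e2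
  simp [MonoidalCategory.id_tensorHom_id]

end Helpers

/-- the right component `(□_{i=1}^n aⁱ)₁` of the left-bracketed iterated funny
tensor, with suitable injections `k_j : ⊗_{i=1}^n aⁱ_{δ_{i,j}} ⟶ (□ aⁱ)₁`, is a wide pushout of
the `n` morphisms obtained from `⊗ aⁱ₀` by tensoring `aʲ_⋄` in position `j` with identities
elsewhere; moreover each `k_j` composed with the `j`-th such morphism is the arrow component
`(□ aⁱ)_⋄`. (The wide pushout is expressed by its elementary universal property.) -/
theorem stmt_2 (n : ℕ) (a : Fin (n + 1) → Arrow V) :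
    ∃ k : ∀ j : Fin (n + 1), iteratedTensor n (deltaObj a j) ⟶ (iterFunny n a).right,
      (∀ j, iteratedTensorHom n (deltaHom a j) ≫ k j
          = eqToHom (iterFunny_left n a).symm ≫ (iterFunny n a).hom) ∧
      ∀ (X : V) (x : ∀ j, iteratedTensor n (deltaObj a j) ⟶ X),
        (∀ j j', iteratedTensorHom n (deltaHom a j) ≫ x j
            = iteratedTensorHom n (deltaHom a j') ≫ x j') →
        ∃! m : (iterFunny n a).right ⟶ X, ∀ j, k j ≫ m = x j := by
  induction n with
  | zero =>
    have e : ∀ j : Fin 1, iteratedTensor 0 (deltaObj a j) = (iterFunny 0 a).right := by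
      intro j
      have : j = 0 := Fin.fin_one_eq_zero j
      subst this
      show deltaObj a 0 0 = (a 0).right
      simp [deltaObj]
    refine ⟨fun j => eqToHom (e j), fun j => ?_, fun X x hx => ?_⟩
    · have : j = 0 := Fin.fin_one_eq_zero j
      subst this
      show deltaHom a 0 0 ≫ eqToHom (e 0) = eqToHom (iterFunny_left 0 a).symm ≫ (a 0).hom
      simp [deltaHom]
      erw [eqToHom_trans]
      exact (Category.comp_id _).trans (Category.id_comp _).symm
    · refine ⟨eqToHom (e 0).symm ≫ x 0, fun j => ?_, fun m hm => ?_⟩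
      · have : j = 0 := Fin.fin_one_eq_zero j
        subst this
        simp
      · have := hm 0
        rw [← this]
        simp
  | succ n ih =>
    obtain ⟨k', hk', hup'⟩ := ih (fun i => a i.castSucc)
    have eL : (iterFunny n (fun i => a i.castSucc)).left
        = iteratedTensor n (fun i => (a i.castSucc).left) := iterFunny_left n _
    -- component equalities for deltaObj
    have eObj_cast : ∀ (j i : Fin (n+1)),
        deltaObj (fun i => a i.castSucc) j i = deltaObj a j.castSucc i.castSucc := by
      intro j i
      by_cases h : i = j <;> simp [deltaObj, h, Fin.castSucc_inj]
    have eObj_cast_last : ∀ j : Fin (n+1),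
        deltaObj a j.castSucc (Fin.last (n+1)) = (a (Fin.last (n+1))).left := by
      intro j
      simp [deltaObj, (Fin.castSucc_lt_last j).ne']
    have eObj_last_cast : ∀ i : Fin (n+1),
        deltaObj a (Fin.last (n+1)) i.castSucc = (a i.castSucc).left := by
      intro i
      simp [deltaObj, (Fin.castSucc_lt_last i).ne]
    have eObj_last_last : deltaObj a (Fin.last (n+1)) (Fin.last (n+1))
        = (a (Fin.last (n+1))).right := by simp [deltaObj]
    -- object-level equalities
    have h_cast : ∀ j : Fin (n+1), iteratedTensor (n+1) (deltaObj a j.castSucc)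
        = MonoidalCategory.tensorObj (iteratedTensor n (deltaObj (fun i => a i.castSucc) j))
            ((a (Fin.last (n+1))).left) := by
      intro j
      show MonoidalCategory.tensorObj (iteratedTensor n (fun i => deltaObj a j.castSucc i.castSucc))
        (deltaObj a j.castSucc (Fin.last (n+1))) = _
      rw [eObj_cast_last j]
      exact congrArg (fun Z => MonoidalCategory.tensorObj Z ((a (Fin.last (n+1))).left))
        (congrArg (iteratedTensor n) (funext fun i => (eObj_cast j i).symm))
    have h_last : iteratedTensor (n+1) (deltaObj a (Fin.last (n+1)))
        = MonoidalCategory.tensorObj (iterFunny n (fun i => a i.castSucc)).left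
            ((a (Fin.last (n+1))).right) := by
      show MonoidalCategory.tensorObj
        (iteratedTensor n (fun i => deltaObj a (Fin.last (n+1)) i.castSucc))
        (deltaObj a (Fin.last (n+1)) (Fin.last (n+1))) = _
      rw [eObj_last_last, eL]
      exact congrArg (fun Z => MonoidalCategory.tensorObj Z ((a (Fin.last (n+1))).right))
        (congrArg (iteratedTensor n) (funext fun i => (eObj_last_cast i)))
    -- morphism component equalities for deltaHom
    have edh_cast : ∀ (j i : Fin (n+1)), deltaHom a j.castSucc i.castSucc
        = deltaHom (fun i => a i.castSucc) j i ≫ eqToHom (eObj_cast j i) := by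
      intro j i
      by_cases h : i = j
      · subst h
        simp [deltaHom]
      · simp [deltaHom, h, Fin.castSucc_inj]
    have edh_cast_last : ∀ j : Fin (n+1), deltaHom a j.castSucc (Fin.last (n+1))
        = eqToHom (eObj_cast_last j).symm := by
      intro j
      simp [deltaHom, (Fin.castSucc_lt_last j).ne']
    have edh_last_cast : ∀ i : Fin (n+1), deltaHom a (Fin.last (n+1)) i.castSucc
        = eqToHom (eObj_last_cast i).symm := by
      intro i
      simp [deltaHom, (Fin.castSucc_lt_last i).ne]
    have edh_last_last : deltaHom a (Fin.last (n+1)) (Fin.last (n+1))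
        = (a (Fin.last (n+1))).hom ≫ eqToHom eObj_last_last.symm := by
      simp [deltaHom]
    -- iterated tensor hom computations
    have hF_cast : ∀ j : Fin (n+1), iteratedTensorHom (n+1) (deltaHom a j.castSucc)
        = MonoidalCategory.whiskerRight (iteratedTensorHom n (deltaHom (fun i => a i.castSucc) j))
            ((a (Fin.last (n+1))).left) ≫ eqToHom (h_cast j).symm := by
      intro j
      show MonoidalCategory.tensorHom
        (iteratedTensorHom n (fun i => deltaHom a j.castSucc i.castSucc))
        (deltaHom a j.castSucc (Fin.last (n+1))) = _
      rw [ith_congr n (deltaHom (fun i => a i.castSucc) j)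
        (fun i => deltaHom a j.castSucc i.castSucc) (eObj_cast j) (edh_cast j),
        edh_cast_last j]
      rw [show (eqToHom (eObj_cast_last j).symm
          : (a (Fin.last (n+1))).left ⟶ deltaObj a j.castSucc (Fin.last (n+1)))
        = 𝟙 _ ≫ eqToHom (eObj_cast_last j).symm from (Category.id_comp _).symm]
      rw [← MonoidalCategory.tensorHom_comp_tensorHom, tensorHom_eqToHom_eqToHom,
        MonoidalCategory.tensorHom_id]
      rfl
    have hF_last : iteratedTensorHom (n+1) (deltaHom a (Fin.last (n+1)))
        = MonoidalCategory.whiskerLeft (iteratedTensor n (fun i => (a i.castSucc).left))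
            (a (Fin.last (n+1))).hom ≫ eqToHom
            (show MonoidalCategory.tensorObj
              (iteratedTensor n (fun i => (a i.castSucc).left)) ((a (Fin.last (n+1))).right)
              = iteratedTensor (n+1) (deltaObj a (Fin.last (n+1))) by rw [h_last, eL]) := by
      show MonoidalCategory.tensorHom
        (iteratedTensorHom n (fun i => deltaHom a (Fin.last (n+1)) i.castSucc))
        (deltaHom a (Fin.last (n+1)) (Fin.last (n+1))) = _
      rw [ith_congr n (fun i => 𝟙 ((a i.castSucc).left))
        (fun i => deltaHom a (Fin.last (n+1)) i.castSucc) (fun i => (eObj_last_cast i).symm)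
        (fun i => by simp [edh_last_cast]),
        ith_id, edh_last_last, Category.id_comp]
      rw [show (eqToHom (congrArg (iteratedTensor n) (funext fun i => (eObj_last_cast i).symm))
          : iteratedTensor n (fun i => (a i.castSucc).left) ⟶ _)
        = 𝟙 _ ≫ eqToHom _ from (Category.id_comp _).symm]
      rw [← MonoidalCategory.tensorHom_comp_tensorHom, tensorHom_eqToHom_eqToHom,
        MonoidalCategory.id_tensorHom]
      rfl
    have hEw : (eqToHom (iterFunny_left (n+1) a).symm
        : iteratedTensor (n+1) (fun i => (a i).left) ⟶ (iterFunny (n+1) a).left)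
        = eqToHom eL.symm ▷ (a (Fin.last (n+1))).left := by
      rw [MonoidalCategory.eqToHom_whiskerRight]
      rfl
    refine ⟨fun j => Fin.lastCases
        (eqToHom h_last ≫ pushout.inl ((iterFunny n (fun i => a i.castSucc)).left ◁ (a (Fin.last (n+1))).hom) ((iterFunny n (fun i => a i.castSucc)).hom ▷ (a (Fin.last (n+1))).left))
        (fun j' => eqToHom (h_cast j') ≫ (k' j' ▷ (a (Fin.last (n+1))).left) ≫ pushout.inr ((iterFunny n (fun i => a i.castSucc)).left ◁ (a (Fin.last (n+1))).hom) ((iterFunny n (fun i => a i.castSucc)).hom ▷ (a (Fin.last (n+1))).left)) j,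
      fun j => ?_, fun X x hx => ?_⟩
    · -- the triangle identities
      induction j using Fin.lastCases with
      | last =>
        simp only [Fin.lastCases_last]
        rw [show (iterFunny (n+1) a).hom
            = ((iterFunny n (fun i => a i.castSucc)).left ◁ (a (Fin.last (n+1))).hom) ≫ pushout.inl ((iterFunny n (fun i => a i.castSucc)).left ◁ (a (Fin.last (n+1))).hom) ((iterFunny n (fun i => a i.castSucc)).hom ▷ (a (Fin.last (n+1))).left) from rfl]
        rw [hEw, hF_last]
        erw [← MonoidalCategory.whisker_exchange_assoc,
          MonoidalCategory.eqToHom_whiskerRight]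
        erw [Category.assoc, eqToHom_trans_assoc]
        rfl
      | cast j =>
        simp only [Fin.lastCases_castSucc]
        rw [show (iterFunny (n+1) a).hom
            = ((iterFunny n (fun i => a i.castSucc)).left ◁ (a (Fin.last (n+1))).hom) ≫ pushout.inl ((iterFunny n (fun i => a i.castSucc)).left ◁ (a (Fin.last (n+1))).hom) ((iterFunny n (fun i => a i.castSucc)).hom ▷ (a (Fin.last (n+1))).left) from rfl]
        rw [hEw, hF_cast j, pushout.condition]
        erw [Category.assoc, eqToHom_trans_assoc, eqToHom_refl, Category.id_comp]
        erw [← MonoidalCategory.comp_whiskerRight_assoc, hk' j,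
          MonoidalCategory.comp_whiskerRight_assoc, MonoidalCategory.eqToHom_whiskerRight]
        rfl
    · -- the universal property
      have key : ∀ j : Fin (n+1), iteratedTensorHom n (deltaHom (fun i => a i.castSucc) j)
          ≫ MonoidalClosed.curry ((β_ (a (Fin.last (n+1))).left (iteratedTensor n (deltaObj (fun i => a i.castSucc) j))).hom ≫ eqToHom (h_cast j).symm ≫ x (Fin.castSucc j))
          = MonoidalClosed.curry ((β_ (a (Fin.last (n+1))).left (iteratedTensor n (fun i => (a i.castSucc).left))).hom
            ≫ iteratedTensorHom (n+1) (deltaHom a j.castSucc) ≫ x j.castSucc) := by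
        intro j
        rw [← MonoidalClosed.curry_natural_left]
        congr 1
        rw [hF_cast j, BraidedCategory.braiding_naturality_right_assoc]
        simp
      have compat' : ∀ j j' : Fin (n+1),
          iteratedTensorHom n (deltaHom (fun i => a i.castSucc) j) ≫ MonoidalClosed.curry ((β_ (a (Fin.last (n+1))).left (iteratedTensor n (deltaObj (fun i => a i.castSucc) j))).hom ≫ eqToHom (h_cast j).symm ≫ x (Fin.castSucc j))
          = iteratedTensorHom n (deltaHom (fun i => a i.castSucc) j') ≫ MonoidalClosed.curry ((β_ (a (Fin.last (n+1))).left (iteratedTensor n (deltaObj (fun i => a i.castSucc) j'))).hom ≫ eqToHom (h_cast j').symm ≫ x (Fin.castSucc j')) := by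
        intro j j'
        rw [key j, key j']
        congr 2
        exact hx j.castSucc j'.castSucc
      obtain ⟨mh, hmh, hmhu⟩ := hup' ((ihom (a (Fin.last (n+1))).left).obj X) (fun j => MonoidalClosed.curry ((β_ (a (Fin.last (n+1))).left (iteratedTensor n (deltaObj (fun i => a i.castSucc) j))).hom ≫ eqToHom (h_cast j).symm ≫ x (Fin.castSucc j))) compat'
      have hLHS : ((iterFunny n (fun i => a i.castSucc)).left ◁ (a (Fin.last (n+1))).hom) ≫ eqToHom h_last.symm
          = (eqToHom eL ▷ (a (Fin.last (n+1))).left) ≫ iteratedTensorHom (n+1) (deltaHom a (Fin.last (n+1))) := by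
        rw [hF_last, ← MonoidalCategory.whisker_exchange_assoc,
          MonoidalCategory.eqToHom_whiskerRight]
        simp
      have hPm : (iterFunny n (fun i => a i.castSucc)).hom ≫ mh
          = eqToHom eL ≫ iteratedTensorHom n (deltaHom (fun i => a i.castSucc) 0)
            ≫ MonoidalClosed.curry ((β_ (a (Fin.last (n+1))).left (iteratedTensor n (deltaObj (fun i => a i.castSucc) 0))).hom ≫ eqToHom (h_cast 0).symm ≫ x (Fin.castSucc 0)) := by
        have h0 : iteratedTensorHom n (deltaHom (fun i => a i.castSucc) 0) ≫ k' 0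
            = eqToHom eL.symm ≫ (iterFunny n (fun i => a i.castSucc)).hom := hk' 0
        calc (iterFunny n (fun i => a i.castSucc)).hom ≫ mh = (eqToHom eL ≫ eqToHom eL.symm ≫ (iterFunny n (fun i => a i.castSucc)).hom) ≫ mh := by simp
          _ = (eqToHom eL ≫ iteratedTensorHom n (deltaHom (fun i => a i.castSucc) 0) ≫ k' 0)
              ≫ mh := by rw [h0]
          _ = eqToHom eL ≫ iteratedTensorHom n (deltaHom (fun i => a i.castSucc) 0)
              ≫ (k' 0 ≫ mh) := by simp [Category.assoc]
          _ = _ := by rw [hmh 0]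
      have hw : ((iterFunny n (fun i => a i.castSucc)).left ◁ (a (Fin.last (n+1))).hom) ≫ eqToHom h_last.symm ≫ x (Fin.last (n+1))
          = ((iterFunny n (fun i => a i.castSucc)).hom ▷ (a (Fin.last (n+1))).left) ≫ (β_ (iterFunny n (fun i => a i.castSucc)).right (a (Fin.last (n+1))).left).hom ≫ MonoidalClosed.uncurry mh := by
        rw [BraidedCategory.braiding_naturality_left_assoc, ← MonoidalClosed.uncurry_natural_left,
          hPm, MonoidalClosed.uncurry_natural_left, MonoidalClosed.uncurry_natural_left,
          MonoidalClosed.uncurry_curry, BraidedCategory.braiding_naturality_right_assoc,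
          BraidedCategory.braiding_naturality_right_assoc, SymmetricCategory.symmetry_assoc,
          ← Category.assoc, hLHS]
        erw [Category.assoc, hx (Fin.last (n+1)) (Fin.castSucc 0),
          hF_cast 0]
        erw [Category.assoc]
        rfl
      refine ⟨pushout.desc (eqToHom h_last.symm ≫ x (Fin.last (n+1)))
          ((β_ (iterFunny n (fun i => a i.castSucc)).right (a (Fin.last (n+1))).left).hom ≫ MonoidalClosed.uncurry mh) hw, fun j => ?_, fun m' hm' => ?_⟩
      · induction j using Fin.lastCases with
        | last =>
          simp only [Fin.lastCases_last]
          erw [Category.assoc, pushout.inl_desc]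
          simp
        | cast j =>
          simp only [Fin.lastCases_castSucc]
          erw [Category.assoc, Category.assoc, pushout.inr_desc]
          rw [BraidedCategory.braiding_naturality_left_assoc,
            ← MonoidalClosed.uncurry_natural_left, hmh j]
          beta_reduce
          rw [MonoidalClosed.uncurry_curry, SymmetricCategory.symmetry_assoc]
          simp
      · apply pushout.hom_ext
        · rw [pushout.inl_desc]
          have hl := hm' (Fin.last (n+1))
          simp only [Fin.lastCases_last] at hl
          rw [← hl]
          erw [Category.assoc, eqToHom_trans_assoc, eqToHom_refl, Category.id_comp]
          rfl
        · rw [pushout.inr_desc]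
          have hmm : MonoidalClosed.curry ((β_ (a (Fin.last (n+1))).left (iterFunny n (fun i => a i.castSucc)).right).hom
              ≫ pushout.inr ((iterFunny n (fun i => a i.castSucc)).left ◁ (a (Fin.last (n+1))).hom) ((iterFunny n (fun i => a i.castSucc)).hom ▷ (a (Fin.last (n+1))).left) ≫ m') = mh := by
            apply hmhu
            intro j
            rw [← MonoidalClosed.curry_natural_left]
            beta_reduce
            congr 1
            rw [BraidedCategory.braiding_naturality_right_assoc]
            congr 1
            have hc := hm' (Fin.castSucc j)
            simp only [Fin.lastCases_castSucc] at hc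
            rw [← hc]
            erw [Category.assoc, eqToHom_trans_assoc, eqToHom_refl, Category.id_comp, Category.assoc]
            rfl
          rw [← hmm, MonoidalClosed.uncurry_curry, SymmetricCategory.symmetry_assoc]
end

section
/- The functor from the category of abstract clones and clone morphisms to the category of small categories, which restricts a clone to its unary multimaps (with identity pr¹ and composition f∘g := f[g]), has a left adjoint 𝓕. For a small category C, the clone 𝓕C has the same objects as C and multimap-sets (𝓕C)(A₁,…,Aₙ;B) = ∐_{j=1}^{n} C(Aⱼ,B), with projection prʲ the pair (j, id_{Aⱼ}) and substitution (j,t)[(k₁,u₁),…,(kₘ,uₘ)] = (k_j, t ∘ u_j). Moreover the unary restriction of 𝓕C is isomorphic to C, so 𝓕 is fully faithful. -/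
open CategoryTheory

universe u v u' v' w

/-- An abstract (multi-sorted) clone on a type `Obj` of objects: multimaps
`Hom (A₁,…,Aₙ) B` with projections and a simultaneous substitution operation satisfying
the clone laws.  Contexts are encoded as functions `Fin n → Obj`. -/
structure CloneStruct (Obj : Type u) : Type (max u (v + 1)) where
  Hom : ∀ {n : ℕ}, (Fin n → Obj) → Obj → Type v
  pr : ∀ {n : ℕ} (Γ : Fin n → Obj) (j : Fin n), Hom Γ (Γ j)
  subst : ∀ {m n : ℕ} {Δ : Fin m → Obj} {B : Obj}, Hom Δ B →
      ∀ {Γ : Fin n → Obj}, (∀ i, Hom Γ (Δ i)) → Hom Γ B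
  pr_subst : ∀ {m n : ℕ} (Δ : Fin m → Obj) (j : Fin m) {Γ : Fin n → Obj}
      (u : ∀ i, Hom Γ (Δ i)), subst (pr Δ j) u = u j
  subst_pr : ∀ {m : ℕ} {Δ : Fin m → Obj} {B : Obj} (t : Hom Δ B), subst t (pr Δ) = t
  subst_assoc : ∀ {m n p : ℕ} {Δ : Fin m → Obj} {B : Obj} (t : Hom Δ B) {Γ : Fin n → Obj}
      (u : ∀ i, Hom Γ (Δ i)) {Λ : Fin p → Obj} (v : ∀ i, Hom Λ (Γ i)),
      subst (subst t u) v = subst t (fun i => subst (u i) v)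

/-- A clone morphism over a fixed map `obj` of objects: maps of multimap-sets preserving
projections and substitution. -/
structure CloneHomOver {OC : Type u} {OD : Type u'} (C : CloneStruct.{u, v} OC)
    (D : CloneStruct.{u', v'} OD) (obj : OC → OD) : Type (max u v u' v') where
  map : ∀ {n : ℕ} {Γ : Fin n → OC} {B : OC}, C.Hom Γ B → D.Hom (fun i => obj (Γ i)) (obj B)
  map_pr : ∀ {n : ℕ} (Γ : Fin n → OC) (j : Fin n),
      map (C.pr Γ j) = D.pr (fun i => obj (Γ i)) j
  map_subst : ∀ {m n : ℕ} {Δ : Fin m → OC} {B : OC} (t : C.Hom Δ B) {Γ : Fin n → OC}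
      (u : ∀ i, C.Hom Γ (Δ i)),
      map (C.subst t u) = D.subst (map t) (fun i => map (u i))

/-- A clone morphism: a map of objects together with a clone morphism over it. -/
structure CloneHom {OC : Type u} {OD : Type u'} (C : CloneStruct.{u, v} OC)
    (D : CloneStruct.{u', v'} OD) : Type (max u v u' v') where
  obj : OC → OD
  hom : CloneHomOver C D obj


def FreeClone (C : Type u) [Category.{v} C] : CloneStruct.{u, v} C where
  Hom Γ B := Σ j, (Γ j ⟶ B)
  pr Γ j := ⟨j, 𝟙 (Γ j)⟩
  subst t _ u := ⟨(u t.1).1, (u t.1).2 ≫ t.2⟩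
  pr_subst Δ j u := by simp
  subst_pr t := by simp
  subst_assoc t u v := by simp

theorem CloneHomOver.ext' {OC : Type u} {OD : Type u'} {Cc : CloneStruct.{u, v} OC}
    {Dc : CloneStruct.{u', v'} OD} {obj : OC → OD} {G H : CloneHomOver Cc Dc obj}
    (h : ∀ {n : ℕ} {Γ : Fin n → OC} {B : OC} (t : Cc.Hom Γ B), G.map t = H.map t) : G = H := by
  cases G with
  | mk g gp gs =>
    cases H with
    | mk g' gp' gs' =>
      have : @g = @g' := by
        funext n Γ B t
        exact h t
      subst this
      rfl

/-- the unary-restriction functor from clones to categories has a left adjoint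
`𝓕`.  Concretely: for every small category `C` there is a clone `F` on the objects of `C`
whose multimap-sets are `F(A₁,…,Aₙ; B) ≃ ∐_{j=1}^n C(Aⱼ, B)`, with projection `prʲ`
corresponding to `(j, 𝟙)` and substitution corresponding to
`(j,t)[(k₁,u₁),…,(kₘ,uₘ)] = (k_j, u_j ≫ t)`; the unary restriction of `F` is isomorphic
(bijectively on hom-sets, preserving identities and composition) to `C`; and `F` satisfies
the universal property of the value at `C` of a left adjoint to the unary-restriction
functor: every functor from `C` to the unary restriction of a clone `Dc` (given by an object
map `obj` and an action `fmap` preserving identities and composition) extends uniquely to a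
clone morphism `F → Dc` over `obj`. -/
theorem stmt_8 {C : Type u} [Category.{v} C] :
    ∃ (F : CloneStruct.{u, v} C)
      (e : ∀ {n : ℕ} (Γ : Fin n → C) (B : C), F.Hom Γ B ≃ Σ j : Fin n, (Γ j ⟶ B)),
      -- projections are the pairs (j, 𝟙)
      (∀ {n : ℕ} (Γ : Fin n → C) (j : Fin n), e Γ (Γ j) (F.pr Γ j) = ⟨j, 𝟙 (Γ j)⟩) ∧
      -- substitution is (j,t)[(k₁,u₁),…,(kₘ,uₘ)] = (k_j, u_j ≫ t)
      (∀ {m n : ℕ} {Δ : Fin m → C} {B : C} (t : F.Hom Δ B) {Γ : Fin n → C}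
          (u : ∀ i, F.Hom Γ (Δ i)),
        e Γ B (F.subst t u)
          = ⟨(e Γ (Δ (e Δ B t).1) (u (e Δ B t).1)).1,
              (e Γ (Δ (e Δ B t).1) (u (e Δ B t).1)).2 ≫ (e Δ B t).2⟩) ∧
      -- the unary restriction of F is isomorphic to C (identity on objects):
      (∀ A B : C,
        Function.Bijective (fun t : F.Hom (fun _ : Fin 1 => A) B => (e (fun _ : Fin 1 => A) B t).2)) ∧
      (∀ A : C, (e (fun _ : Fin 1 => A) A (F.pr (fun _ : Fin 1 => A) 0)).2 = 𝟙 A) ∧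
      (∀ (A B B' : C) (f : F.Hom (fun _ : Fin 1 => A) B) (g : F.Hom (fun _ : Fin 1 => B) B'),
        (e (fun _ : Fin 1 => A) B' (F.subst g (fun _ => f))).2
          = (e (fun _ : Fin 1 => A) B f).2 ≫ (e (fun _ : Fin 1 => B) B' g).2) ∧
      -- the universal property of the left adjoint:
      (∀ {OD : Type u'} (Dc : CloneStruct.{u', v'} OD) (obj : C → OD)
          (fmap : ∀ {A B : C}, (A ⟶ B) → Dc.Hom (fun _ : Fin 1 => obj A) (obj B)),
        (∀ A : C, fmap (𝟙 A) = Dc.pr (fun _ : Fin 1 => obj A) 0) →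
        (∀ {A B B' : C} (f : A ⟶ B) (g : B ⟶ B'),
            fmap (f ≫ g) = Dc.subst (fmap g) (fun _ => fmap f)) →
        ∃! G : CloneHomOver F Dc obj, ∀ {A B : C} (f : A ⟶ B),
          G.map ((e (fun _ : Fin 1 => A) B).symm ⟨0, f⟩) = fmap f) := by
  refine ⟨FreeClone C, fun Γ B => Equiv.refl _, fun Γ j => rfl, @fun m n Δ B t Γ u => rfl, ?_, fun A => rfl,
        fun A B B' f g => rfl, ?_⟩
  · intro A B
    constructor
    · rintro ⟨j, f⟩ ⟨k, g⟩ h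
      obtain rfl : j = 0 := Subsingleton.elim _ _
      obtain rfl : k = 0 := Subsingleton.elim _ _
      simp only [Equiv.refl_apply] at h
      subst h
      rfl
    · exact fun f => ⟨⟨0, f⟩, rfl⟩
  · intro OD Dc obj fmap hid hcomp
    refine ⟨⟨fun {n Γ B} t => Dc.subst (fmap t.2) (fun _ => Dc.pr (fun i => obj (Γ i)) t.1),
             ?_, ?_⟩, ?_, ?_⟩
    · intro n Γ j
      show Dc.subst (fmap (𝟙 (Γ j))) (fun _ => Dc.pr (fun i => obj (Γ i)) j)
        = Dc.pr (fun i => obj (Γ i)) j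
      rw [hid, Dc.pr_subst]
    · rintro m n Δ B ⟨j, t⟩ Γ u
      show Dc.subst (fmap ((u j).2 ≫ t)) (fun _ : Fin 1 => Dc.pr (fun i => obj (Γ i)) (u j).1)
        = Dc.subst (Dc.subst (fmap t) (fun _ : Fin 1 => Dc.pr (fun i => obj (Δ i)) j))
            (fun i => Dc.subst (fmap (u i).2)
              (fun _ : Fin 1 => Dc.pr (fun i' => obj (Γ i')) (u i).1))
      rw [hcomp, Dc.subst_assoc, Dc.subst_assoc]
      congr 1
      funext i
      rw [Dc.pr_subst]
    · intro A B f
      show Dc.subst (fmap f) (fun _ => Dc.pr (fun _ : Fin 1 => obj A) 0) = fmap f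
      have h1 : (fun _ : Fin 1 => Dc.pr (fun _ : Fin 1 => obj A) 0)
          = Dc.pr (fun _ : Fin 1 => obj A) := by
        funext i
        obtain rfl : i = 0 := Subsingleton.elim _ _
        rfl
      rw [h1, Dc.subst_pr]
    · intro G hG
      apply CloneHomOver.ext'
      rintro n Γ B ⟨j, f⟩
      have e1 : (⟨j, f⟩ : (FreeClone C).Hom Γ B)
          = (FreeClone C).subst (⟨0, f⟩ : (FreeClone C).Hom (fun _ : Fin 1 => Γ j) B)
              (fun _ => (FreeClone C).pr Γ j) := by
        show _ = (⟨j, 𝟙 (Γ j) ≫ f⟩ : (FreeClone C).Hom Γ B)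
        simp [FreeClone]
      rw [e1]
      refine (G.map_subst _ _).trans ?_
      have h2 : G.map (⟨0, f⟩ : (FreeClone C).Hom (fun _ : Fin 1 => Γ j) B) = fmap f := hG f
      rw [h2]
      show Dc.subst (fmap f) (fun _ : Fin 1 => G.map ((FreeClone C).pr Γ j))
        = Dc.subst (fmap (𝟙 (Γ j) ≫ f)) (fun _ : Fin 1 => Dc.pr (fun i => obj (Γ i)) j)
      rw [Category.id_comp]
      congr 1
      funext i
      rw [G.map_pr]
end

section
/- Let 𝐂 be a premulticategory. If t : Γ,A,Γ' → B and u : Δ → A are both central multimaps, then the substitute t[Γ,u,Γ'] : Γ,Δ,Γ' → B is central. -/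
universe u v

/-- A premulticategory (Staton–Levy): objects, multimaps indexed by a list of sources and a
target, identities, and a one-at-a-time substitution operation satisfying unit and
associativity laws. -/
structure PreMulticat : Type (max (u + 1) (v + 1)) where
  Obj : Type u
  Hom : List Obj → Obj → Type v
  id : ∀ A : Obj, Hom [A] A
  subst : ∀ (Γ : List Obj) (A : Obj) (Γ' : List Obj) {B : Obj},
      Hom (Γ ++ (A :: Γ')) B → ∀ {Δ : List Obj}, Hom Δ A → Hom (Γ ++ (Δ ++ Γ')) B
  id_subst : ∀ {A : Obj} {Δ : List Obj} (u : Hom Δ A),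
      subst [] A [] (id A) u
        = _root_.cast (congrArg (fun l => Hom l A) (List.append_nil Δ).symm) u
  subst_id : ∀ (Γ : List Obj) (A : Obj) (Γ' : List Obj) {B : Obj}
      (t : Hom (Γ ++ (A :: Γ')) B), subst Γ A Γ' t (id A) = t
  subst_assoc : ∀ (Γ₁ : List Obj) (B : Obj) (Γ₁' : List Obj) {C : Obj}
      (t : Hom (Γ₁ ++ (B :: Γ₁')) C) (Γ₂ : List Obj) (A : Obj) (Γ₂' : List Obj)
      (u : Hom (Γ₂ ++ (A :: Γ₂')) B) {Δ : List Obj} (v : Hom Δ A),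
      subst (Γ₁ ++ Γ₂) A (Γ₂' ++ Γ₁')
          (_root_.cast (congrArg (fun l => Hom l C) (by simp)) (subst Γ₁ B Γ₁' t u)) v
        = _root_.cast (congrArg (fun l => Hom l C) (by simp))
            (subst Γ₁ B Γ₁' t (subst Γ₂ A Γ₂' u v))

namespace PreMulticat

variable (M : PreMulticat.{u, v})

/-- Transport of a multimap along an equality of contexts. -/
def cst {Γ Γ' : List M.Obj} {B : M.Obj} (h : Γ = Γ') (t : M.Hom Γ B) : M.Hom Γ' B :=
  _root_.cast (congrArg (fun l => M.Hom l B) h) t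

/-- A multimap `u : Γ → A` is central if substituting it and any other multimap into any third
multimap can be done in either order (in both relative positions). -/
def Central {Γ : List M.Obj} {A : M.Obj} (u : M.Hom Γ A) : Prop :=
  (∀ (Δ₁ Δ₂ Δ₃ : List M.Obj) (B : M.Obj) {C : M.Obj}
      (t : M.Hom (Δ₁ ++ (A :: (Δ₂ ++ (B :: Δ₃)))) C) (Λ : List M.Obj) (v : M.Hom Λ B),
      M.cst (by simp)
          (M.subst (Δ₁ ++ (Γ ++ Δ₂)) B Δ₃
            (M.cst (by simp) (M.subst Δ₁ A (Δ₂ ++ (B :: Δ₃)) t u)) v)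
        = M.subst Δ₁ A (Δ₂ ++ (Λ ++ Δ₃))
            (M.cst (by simp) (M.subst (Δ₁ ++ (A :: Δ₂)) B Δ₃ (M.cst (by simp) t) v)) u)
  ∧ (∀ (Δ₁ Δ₂ Δ₃ : List M.Obj) (B : M.Obj) {C : M.Obj}
      (t' : M.Hom (Δ₁ ++ (B :: (Δ₂ ++ (A :: Δ₃)))) C) (Λ : List M.Obj) (v : M.Hom Λ B),
      M.cst (by simp)
          (M.subst Δ₁ B (Δ₂ ++ (Γ ++ Δ₃))
            (M.cst (by simp) (M.subst (Δ₁ ++ (B :: Δ₂)) A Δ₃ (M.cst (by simp) t') u)) v)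
        = M.subst (Δ₁ ++ (Λ ++ Δ₂)) A Δ₃
            (M.cst (by simp) (M.subst Δ₁ B (Δ₂ ++ (A :: Δ₃)) (M.cst (by simp) t') v)) u)

end PreMulticat

/-! Write `w = t[u]`. The first interchange law for `w` is the chain
`s[w][v] = s[t][u][v] = s[t][v][u] = s[v][t][u] = s[v][w]`, by associativity, centrality of `u`
(inside `s[t]`), centrality of `t`, and associativity again; the second law is its mirror image.
The contexts on the two sides of each step agree only up to `List.append_assoc`, so the steps are
chained as heterogeneous equalities. -/

namespace PreMulticat

variable {M : PreMulticat.{u, v}}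

theorem cst_heq {Γ Γ' : List M.Obj} {B : M.Obj} (h : Γ = Γ') (t : M.Hom Γ B) :
    HEq (M.cst h t) t :=
  cast_heq _ _

@[simp]
theorem cst_heq_iff {Γ Γ' Λ : List M.Obj} {B C : M.Obj} (h : Γ = Γ') (t : M.Hom Γ B)
    (s : M.Hom Λ C) : HEq (M.cst h t) s ↔ HEq t s :=
  cast_heq_iff_heq _ _ _

@[simp]
theorem heq_cst_iff {Γ Γ' Λ : List M.Obj} {B C : M.Obj} (h : Γ = Γ') (t : M.Hom Γ B)
    (s : M.Hom Λ C) : HEq s (M.cst h t) ↔ HEq s t :=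
  heq_cast_iff_heq _ _ _

theorem subst_hcongr {Γ₁ Γ₂ Γ₁' Γ₂' : List M.Obj} {A B : M.Obj} (hΓ : Γ₁ = Γ₂)
    (hΓ' : Γ₁' = Γ₂') {t₁ : M.Hom (Γ₁ ++ A :: Γ₁') B} {t₂ : M.Hom (Γ₂ ++ A :: Γ₂') B}
    (ht : HEq t₁ t₂) {Δ : List M.Obj} (v : M.Hom Δ A) :
    HEq (M.subst Γ₁ A Γ₁' t₁ v) (M.subst Γ₂ A Γ₂' t₂ v) := by
  subst hΓ hΓ'
  rw [eq_of_heq ht]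

theorem subst_subst_heq {Γ₁ Γ₁' : List M.Obj} {B C : M.Obj} (t : M.Hom (Γ₁ ++ B :: Γ₁') C)
    {Γ₂ Γ₂' : List M.Obj} {A : M.Obj} (u : M.Hom (Γ₂ ++ A :: Γ₂') B) {Δ : List M.Obj}
    (v : M.Hom Δ A) {L R : List M.Obj} (hL : L = Γ₁ ++ Γ₂) (hR : R = Γ₂' ++ Γ₁')
    {tu : M.Hom (L ++ A :: R) C} (htu : HEq tu (M.subst Γ₁ B Γ₁' t u)) :
    HEq (M.subst L A R tu v) (M.subst Γ₁ B Γ₁' t (M.subst Γ₂ A Γ₂' u v)) := by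
  subst hL hR
  rw [eq_of_heq ((heq_cst_iff (by simp) _ _).2 htu)]
  exact (heq_of_eq (M.subst_assoc Γ₁ B Γ₁' t Γ₂ A Γ₂' u v)).trans (cast_heq _ _)

namespace Central

variable {Γ : List M.Obj} {A : M.Obj} {u : M.Hom Γ A}

theorem left_heq (hu : M.Central u) (Δ₁ Δ₂ Δ₃ : List M.Obj) (B : M.Obj) {C : M.Obj}
    (t : M.Hom (Δ₁ ++ A :: (Δ₂ ++ B :: Δ₃)) C) {Λ : List M.Obj} (v : M.Hom Λ B) :
    HEq (M.subst (Δ₁ ++ (Γ ++ Δ₂)) B Δ₃ (M.cst (by simp) (M.subst Δ₁ A _ t u)) v)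
      (M.subst Δ₁ A (Δ₂ ++ (Λ ++ Δ₃))
        (M.cst (by simp) (M.subst (Δ₁ ++ A :: Δ₂) B Δ₃ (M.cst (by simp) t) v)) u) :=
  (cst_heq_iff _ _ _).1 (heq_of_eq (hu.1 Δ₁ Δ₂ Δ₃ B t Λ v))

theorem right_heq (hu : M.Central u) (Δ₁ Δ₂ Δ₃ : List M.Obj) (B : M.Obj) {C : M.Obj}
    (t : M.Hom (Δ₁ ++ B :: (Δ₂ ++ A :: Δ₃)) C) {Λ : List M.Obj} (v : M.Hom Λ B) :
    HEq (M.subst Δ₁ B (Δ₂ ++ (Γ ++ Δ₃))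
        (M.cst (by simp) (M.subst (Δ₁ ++ B :: Δ₂) A Δ₃ (M.cst (by simp) t) u)) v)
      (M.subst (Δ₁ ++ (Λ ++ Δ₂)) A Δ₃
        (M.cst (by simp) (M.subst Δ₁ B (Δ₂ ++ A :: Δ₃) (M.cst (by simp) t) v)) u) :=
  (cst_heq_iff _ _ _).1 (heq_of_eq (hu.2 Δ₁ Δ₂ Δ₃ B t Λ v))

end Central

end PreMulticat

open PreMulticat in
/-- in a premulticategory, if `t : Γ,A,Γ' → B` and `u : Δ → A` are both central,
then so is the substitute `t[Γ,u,Γ'] : Γ,Δ,Γ' → B`. -/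
theorem stmt_12 (M : PreMulticat.{u, v}) (Γ : List M.Obj) (A : M.Obj) (Γ' : List M.Obj)
    {B : M.Obj} (t : M.Hom (Γ ++ (A :: Γ')) B) {Δ : List M.Obj} (u : M.Hom Δ A)
    (ht : M.Central t) (hu : M.Central u) :
    M.Central (M.subst Γ A Γ' t u) := by
  constructor
  · intro Δ₁ Δ₂ Δ₃ B' C s Λ v
    let st : M.Hom (Δ₁ ++ Γ ++ A :: (Γ' ++ Δ₂ ++ B' :: Δ₃)) C :=
      M.cst (by simp) (M.subst Δ₁ B _ s t)
    refine eq_of_heq <| (cst_heq_iff _ _ _).2 <|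
      (subst_hcongr (Γ₂ := Δ₁ ++ Γ ++ (Δ ++ (Γ' ++ Δ₂))) (by simp) rfl ?_ v).trans <|
      (hu.left_heq (Δ₁ ++ Γ) (Γ' ++ Δ₂) Δ₃ B' st v).trans <|
      (subst_hcongr rfl (by simp) ?_ u).trans
        (subst_subst_heq _ t u rfl rfl (cst_heq (by simp) _))
    · simpa using (subst_subst_heq s t u rfl (by simp) (by simp [st])).symm
    · simpa using
        (subst_hcongr (by simp) rfl (by simp [st]) v).trans (ht.left_heq Δ₁ Δ₂ Δ₃ B' s v)
  · intro Δ₁ Δ₂ Δ₃ B' C s Λ v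
    let st : M.Hom (Δ₁ ++ B' :: (Δ₂ ++ Γ ++ A :: (Γ' ++ Δ₃))) C :=
      M.cst (by simp) (M.subst (Δ₁ ++ B' :: Δ₂) B Δ₃ (M.cst (by simp) s) t)
    refine eq_of_heq <| (cst_heq_iff _ _ _).2 <|
      (subst_hcongr (Γ₂' := Δ₂ ++ Γ ++ (Δ ++ (Γ' ++ Δ₃))) rfl (by simp) ?_ v).trans <|
      (hu.right_heq Δ₁ (Δ₂ ++ Γ) (Γ' ++ Δ₃) B' st v).trans <|
      (subst_hcongr (by simp) rfl ?_ u).trans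
        (subst_subst_heq _ t u rfl rfl (cst_heq (by simp) _))
    · simpa using (subst_subst_heq _ t u (by simp) rfl (by simp [st])).symm
    · simpa using
        (subst_hcongr rfl (by simp) (by simp [st]) v).trans (ht.right_heq Δ₁ Δ₂ Δ₃ B' s v)
end

section
/- Let 𝐂 be a premulticategory, t : Γ,A₁,…,A_j,Λ,A_{j+1},…,Aₙ,Γ' → B a multimap, and uᵢ : Δᵢ → Aᵢ (1 ≤ i ≤ n) multimaps such that u₁,…,u_j are all central. Then t⟨Γ,u₁,…,u_j,Λ,A_{j+1},…,Aₙ,Γ'⟩⟨Γ,Δ₁,…,Δ_j,Λ,u_{j+1},…,uₙ,Γ'⟩ = t⟨Γ,A₁,…,A_j,Λ,u_{j+1},…,uₙ,Γ'⟩⟨Γ,u₁,…,u_j,Λ,Δ_{j+1},…,Δₙ,Γ'⟩. -/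
universe u v

namespace PreMulticat

variable (M : PreMulticat.{u, v})

/-- The data of a single substitution: a multimap `hom : src → tgt` to be plugged in. -/
structure Sub : Type (max u v) where
  tgt : M.Obj
  src : List M.Obj
  hom : M.Hom src tgt

variable {M}

/-- The context `A₁,…,Aₙ,Γ'` of targets of a list of substitutions, followed by `Γ'`. -/
def objCtx : List M.Sub → List M.Obj → List M.Obj
  | [], Γ' => Γ'
  | s :: L, Γ' => s.tgt :: objCtx L Γ'

/-- The context `Δ₁,…,Δₙ,Γ'` of sources of a list of substitutions, followed by `Γ'`. -/
def newCtx : List M.Sub → List M.Obj → List M.Obj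
  | [], Γ' => Γ'
  | s :: L, Γ' => s.src ++ newCtx L Γ'

@[simp] theorem objCtx_nil (Γ' : List M.Obj) : objCtx ([] : List M.Sub) Γ' = Γ' := rfl

@[simp] theorem objCtx_cons (s : M.Sub) (L : List M.Sub) (Γ' : List M.Obj) :
    objCtx (s :: L) Γ' = s.tgt :: objCtx L Γ' := rfl

@[simp] theorem newCtx_nil (Γ' : List M.Obj) : newCtx ([] : List M.Sub) Γ' = Γ' := rfl

@[simp] theorem newCtx_cons (s : M.Sub) (L : List M.Sub) (Γ' : List M.Obj) :
    newCtx (s :: L) Γ' = s.src ++ newCtx L Γ' := rfl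

@[simp] theorem objCtx_eq (L : List M.Sub) (Γ' : List M.Obj) :
    objCtx L Γ' = L.map Sub.tgt ++ Γ' := by
  induction L with
  | nil => rfl
  | cons s L ih => simp [ih]

@[simp] theorem newCtx_eq (L : List M.Sub) (Γ' : List M.Obj) :
    newCtx L Γ' = (L.map Sub.src).flatten ++ Γ' := by
  induction L with
  | nil => rfl
  | cons s L ih => simp [ih]

/-- Iterated substitution `t⟨Γ, u₁, …, uₙ, Γ'⟩`, defined recursively by substituting the last
multimap of the list `L` (the paper's recursion): `t⟨Γ,u₁,Γ'⟩ = t[Γ,u₁,Γ']` and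
`t⟨Γ,u₁,…,uₙ,Γ'⟩ = t⟨Γ,u₁,…,u_{n-1},Aₙ,Γ'⟩[Γ,Δ₁,…,Δ_{n-1},uₙ,Γ']`. -/
def isub (Γ : List M.Obj) (L : List M.Sub) :
    ∀ (Γ' : List M.Obj) {B : M.Obj}, M.Hom (Γ ++ objCtx L Γ') B → M.Hom (Γ ++ newCtx L Γ') B :=
  L.reverseRecOn (motive := fun L => ∀ (Γ' : List M.Obj) {B : M.Obj},
      M.Hom (Γ ++ objCtx L Γ') B → M.Hom (Γ ++ newCtx L Γ') B)
    (fun _ _ t => t)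
    (fun L s ih Γ' _ t =>
      M.cst (by simp)
        (M.subst (Γ ++ newCtx L []) s.tgt Γ'
          (M.cst (by simp) (ih (s.tgt :: Γ') (M.cst (by simp) t))) s.hom))

end PreMulticat

namespace PreMulticat

variable {M : PreMulticat.{u, v}}

theorem subst_congr {Γ₁ Γ₂ Γ₁' Γ₂' : List M.Obj} {A B : M.Obj} {Δ : List M.Obj}
    (h : Γ₁ = Γ₂) (h' : Γ₁' = Γ₂')
    {t : M.Hom (Γ₁ ++ (A :: Γ₁')) B} {t' : M.Hom (Γ₂ ++ (A :: Γ₂')) B} (ht : HEq t t')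
    (u : M.Hom Δ A) :
    HEq (M.subst Γ₁ A Γ₁' t u) (M.subst Γ₂ A Γ₂' t' u) := by
  subst h; subst h'; cases ht; rfl

theorem isub_congr {Γ₁ Γ₂ : List M.Obj} (L : List M.Sub) {Γ₁' Γ₂' : List M.Obj}
    (h : Γ₁ = Γ₂) (h' : Γ₁' = Γ₂') {B : M.Obj}
    {t : M.Hom (Γ₁ ++ objCtx L Γ₁') B} {t' : M.Hom (Γ₂ ++ objCtx L Γ₂') B} (ht : HEq t t') :
    HEq (isub Γ₁ L Γ₁' t) (isub Γ₂ L Γ₂' t') := by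
  subst h; subst h'; cases ht; rfl

theorem subst_assoc_heq (Γ₁ : List M.Obj) (Bo : M.Obj) (Γ₁' : List M.Obj) {C : M.Obj}
    (t : M.Hom (Γ₁ ++ (Bo :: Γ₁')) C) (Γ₂ : List M.Obj) (A : M.Obj) (Γ₂' : List M.Obj)
    (u : M.Hom (Γ₂ ++ (A :: Γ₂')) Bo) {Δ : List M.Obj} (v : M.Hom Δ A)
    {X : M.Hom ((Γ₁ ++ Γ₂) ++ (A :: (Γ₂' ++ Γ₁'))) C} (hX : HEq X (M.subst Γ₁ Bo Γ₁' t u)) :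
    HEq (M.subst (Γ₁ ++ Γ₂) A (Γ₂' ++ Γ₁') X v)
        (M.subst Γ₁ Bo Γ₁' t (M.subst Γ₂ A Γ₂' u v)) := by
  have h := M.subst_assoc Γ₁ Bo Γ₁' t Γ₂ A Γ₂' u v
  refine HEq.trans ?_ ((heq_of_eq h).trans (cast_heq _ _))
  exact subst_congr rfl rfl (hX.trans (cast_heq _ _).symm) v

theorem central_heq {Γu : List M.Obj} {A : M.Obj} {u : M.Hom Γu A} (hu : M.Central u)
    (Δ₁ Δ₂ Δ₃ : List M.Obj) (Bv : M.Obj) {C : M.Obj}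
    (t : M.Hom (Δ₁ ++ (A :: (Δ₂ ++ (Bv :: Δ₃)))) C) {Λ : List M.Obj} (v : M.Hom Λ Bv)
    {X : M.Hom ((Δ₁ ++ (Γu ++ Δ₂)) ++ (Bv :: Δ₃)) C}
    (hX : HEq X (M.subst Δ₁ A (Δ₂ ++ (Bv :: Δ₃)) t u))
    {Y : M.Hom ((Δ₁ ++ (A :: Δ₂)) ++ (Bv :: Δ₃)) C} (hY : HEq Y t) :
    HEq (M.subst (Δ₁ ++ (Γu ++ Δ₂)) Bv Δ₃ X v)
        (M.subst Δ₁ A (Δ₂ ++ (Λ ++ Δ₃))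
          (M.cst (by simp) (M.subst (Δ₁ ++ (A :: Δ₂)) Bv Δ₃ Y v)) u) := by
  have h := hu.1 Δ₁ Δ₂ Δ₃ Bv t Λ v
  refine HEq.trans ?_ ((heq_of_eq h).trans ?_)
  · refine HEq.trans ?_ (cst_heq _ _).symm
    refine subst_congr rfl rfl ?_ v
    exact hX.trans (cst_heq _ _).symm
  · refine subst_congr rfl rfl (heq_of_eq ?_) u
    congr 1
    refine eq_of_heq ?_
    refine subst_congr rfl rfl ?_ v
    exact (cst_heq _ _).trans hY.symm

theorem isub_nil (Γ Γ' : List M.Obj) {B : M.Obj}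
    (t : M.Hom (Γ ++ objCtx ([] : List M.Sub) Γ') B) :
    isub Γ [] Γ' t = t := by
  unfold isub
  exact congrArg (fun f => f Γ' t) (List.reverseRecOn_nil (motive := fun L => ∀ (Γ' : List M.Obj) {B : M.Obj},
      M.Hom (Γ ++ objCtx L Γ') B → M.Hom (Γ ++ newCtx L Γ') B) _ _)

theorem isub_concat_heq (Γ : List M.Obj) (L : List M.Sub) (s : M.Sub) (Γ' : List M.Obj)
    {B : M.Obj} (t : M.Hom (Γ ++ objCtx (L ++ [s]) Γ') B)
    {t' : M.Hom (Γ ++ objCtx L (s.tgt :: Γ')) B} (ht : HEq t' t) :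
    HEq (isub Γ (L ++ [s]) Γ' t)
        (M.subst (Γ ++ newCtx L []) s.tgt Γ'
          (M.cst (by simp) (isub Γ L (s.tgt :: Γ') t')) s.hom) := by
  have h : isub Γ (L ++ [s]) Γ' t
      = M.cst (by simp)
          (M.subst (Γ ++ newCtx L []) s.tgt Γ'
            (M.cst (by simp) (isub Γ L (s.tgt :: Γ') (M.cst (by simp) t))) s.hom) := by
    unfold isub
    exact congrFun (congrFun (congrFun (List.reverseRecOn_concat (motive := fun L => ∀ (Γ' : List M.Obj) {B : M.Obj},
      M.Hom (Γ ++ objCtx L Γ') B → M.Hom (Γ ++ newCtx L Γ') B) _ _ _ _) Γ') B) t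
  rw [h]
  refine (cst_heq _ _).trans ?_
  refine subst_congr rfl rfl ?_ s.hom
  refine ((cst_heq _ _).trans ?_).trans (cst_heq _ _).symm
  exact isub_congr L rfl rfl ((cst_heq _ _).trans ht.symm)

theorem pull (Γ : List M.Obj) (L : List M.Sub) (hc : ∀ s ∈ L, M.Central s.hom)
    (Δm : List M.Obj) (Bv : M.Obj) (Γ' : List M.Obj) {C : M.Obj}
    (t : M.Hom (Γ ++ objCtx L (Δm ++ (Bv :: Γ'))) C) {Λv : List M.Obj} (v : M.Hom Λv Bv)
    (t₁ : M.Hom ((Γ ++ newCtx L Δm) ++ (Bv :: Γ')) C)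
    (ht₁ : HEq t₁ (isub Γ L (Δm ++ (Bv :: Γ')) t))
    (t₂ : M.Hom ((Γ ++ objCtx L Δm) ++ (Bv :: Γ')) C) (ht₂ : HEq t₂ t)
    (t₃ : M.Hom (Γ ++ objCtx L (Δm ++ (Λv ++ Γ'))) C)
    (ht₃ : HEq t₃ (M.subst (Γ ++ objCtx L Δm) Bv Γ' t₂ v)) :
    HEq (M.subst (Γ ++ newCtx L Δm) Bv Γ' t₁ v) (isub Γ L (Δm ++ (Λv ++ Γ')) t₃) := by
  revert hc Δm t t₁ ht₁ t₂ ht₂ t₃ ht₃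
  induction L using List.reverseRecOn with
  | nil =>
      intro hc Δm t t₁ ht₁ t₂ ht₂ t₃ ht₃
      rw [isub_nil] at ht₁ ⊢
      exact (subst_congr (by simp) rfl (ht₁.trans ht₂.symm) v).trans ht₃.symm
  | append_singleton L s ih =>
      intro hc Δm t t₁ ht₁ t₂ ht₂ t₃ ht₃
      have hs : M.Central s.hom := hc s (by simp)
      have hcL : ∀ s' ∈ L, M.Central s'.hom := fun s' h => hc s' (by simp [h])
      refine HEq.trans
        (subst_congr (Γ₂ := (Γ ++ newCtx L []) ++ (s.src ++ Δm)) (Γ₂' := Γ')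
          (by simp) rfl (HEq.symm (cst_heq (by simp) t₁)) v) ?_
      refine HEq.trans
        (central_heq hs (Γ ++ newCtx L []) Δm Γ' Bv
          (M.cst (by simp) (isub Γ L (s.tgt :: (Δm ++ (Bv :: Γ'))) (M.cst (by simp) t))) v
          (X := M.cst (by simp) t₁)
          (((cst_heq _ _).trans ht₁).trans
            (isub_concat_heq Γ L s (Δm ++ (Bv :: Γ')) t (cst_heq (by simp) t)))
          (Y := M.cst (by simp)
            (M.cst (by simp) (isub Γ L (s.tgt :: (Δm ++ (Bv :: Γ'))) (M.cst (by simp) t))))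
          (cst_heq _ _)) ?_
      refine HEq.trans ?_
        (HEq.symm (isub_concat_heq Γ L s (Δm ++ (Λv ++ Γ')) t₃ (cst_heq (by simp) t₃)))
      refine subst_congr rfl rfl ?_ s.hom
      refine (cst_heq _ _).trans (HEq.trans ?_ (HEq.symm (cst_heq _ _)))
      refine HEq.trans
        (subst_congr (Γ₂ := Γ ++ newCtx L (s.tgt :: Δm)) (Γ₂' := Γ')
          (by simp) rfl (HEq.symm (cst_heq (by simp) _)) v) ?_
      exact ih hcL (s.tgt :: Δm) (M.cst (by simp) t)
        (M.cst (by simp)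
          (M.cst (by simp)
            (M.cst (by simp) (isub Γ L (s.tgt :: (Δm ++ (Bv :: Γ'))) (M.cst (by simp) t)))))
        ((cst_heq _ _).trans ((cst_heq _ _).trans (cst_heq _ _)))
        (M.cst (by simp) t)
        ((cst_heq _ _).trans (HEq.symm (cst_heq _ _)))
        (M.cst (by simp) t₃)
        ((cst_heq _ _).trans (ht₃.trans
          (subst_congr (Γ₂ := Γ ++ objCtx L (s.tgt :: Δm)) (Γ₂' := Γ') (by simp) rfl
            (ht₂.trans (HEq.symm (cst_heq (by simp) t))) v)))


theorem interchange (Γ Λ : List M.Obj) (L₁ : List M.Sub) (hc : ∀ s ∈ L₁, M.Central s.hom)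
    (L₂ : List M.Sub) (Γ' : List M.Obj) {B : M.Obj}
    (t : M.Hom (Γ ++ objCtx L₁ (Λ ++ objCtx L₂ Γ')) B)
    (t₁ : M.Hom ((Γ ++ (newCtx L₁ [] ++ Λ)) ++ objCtx L₂ Γ') B)
    (ht₁ : HEq t₁ (isub Γ L₁ (Λ ++ objCtx L₂ Γ') t))
    (t₂ : M.Hom ((Γ ++ (objCtx L₁ [] ++ Λ)) ++ objCtx L₂ Γ') B)
    (ht₂ : HEq t₂ t)
    (t₃ : M.Hom (Γ ++ objCtx L₁ (Λ ++ newCtx L₂ Γ')) B)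
    (ht₃ : HEq t₃ (isub (Γ ++ (objCtx L₁ [] ++ Λ)) L₂ Γ' t₂)) :
    HEq (isub (Γ ++ (newCtx L₁ [] ++ Λ)) L₂ Γ' t₁) (isub Γ L₁ (Λ ++ newCtx L₂ Γ') t₃) := by
  revert Γ' t t₁ ht₁ t₂ ht₂ t₃ ht₃
  induction L₂ using List.reverseRecOn with
  | nil =>
      intro Γ' t t₁ ht₁ t₂ ht₂ t₃ ht₃
      rw [isub_nil] at ht₃ ⊢
      exact ht₁.trans (isub_congr L₁ rfl (by simp) (ht₃.trans ht₂).symm)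
  | append_singleton L s ih =>
      intro Γ' t t₁ ht₁ t₂ ht₂ t₃ ht₃
      -- unfold the left-hand side one step
      refine HEq.trans
        (isub_concat_heq (Γ ++ (newCtx L₁ [] ++ Λ)) L s Γ' t₁ (cst_heq (by simp) t₁)) ?_
      -- move to the context of `pull`
      refine HEq.trans
        (subst_congr (Γ₂ := Γ ++ newCtx L₁ (Λ ++ newCtx L [])) (Γ₂' := Γ')
          (by simp) rfl
          ((cst_heq _ _).trans (HEq.symm (cst_heq (by simp)
            (isub (Γ ++ (newCtx L₁ [] ++ Λ)) L (s.tgt :: Γ')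
              (M.cst (by simp) t₁))))) s.hom) ?_
      refine HEq.trans
        (pull Γ L₁ hc (Λ ++ newCtx L []) s.tgt Γ'
          (M.cst (by simp)
            (isub (Γ ++ (objCtx L₁ [] ++ Λ)) L (s.tgt :: Γ') (M.cst (by simp) t₂)))
          s.hom
          (M.cst (by simp)
            (isub (Γ ++ (newCtx L₁ [] ++ Λ)) L (s.tgt :: Γ') (M.cst (by simp) t₁)))
          ?hp1
          (M.cst (by simp)
            (isub (Γ ++ (objCtx L₁ [] ++ Λ)) L (s.tgt :: Γ') (M.cst (by simp) t₂)))
          ((cst_heq _ _).trans (HEq.symm (cst_heq _ _)))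
          (M.cst (by simp) t₃)
          ?hp3) ?_
      case hp1 =>
        refine (cst_heq _ _).trans (HEq.trans
          (b := isub Γ L₁ (Λ ++ newCtx L (s.tgt :: Γ'))
            (M.cst (by simp)
              (isub (Γ ++ (objCtx L₁ [] ++ Λ)) L (s.tgt :: Γ') (M.cst (by simp) t₂)))) ?_
          (isub_congr L₁ rfl (by simp)
            ((cst_heq _ _).trans (HEq.symm (cst_heq _ _)))))
        exact ih (s.tgt :: Γ') (M.cst (by simp) t)
          (M.cst (by simp) t₁)
          ((cst_heq _ _).trans (ht₁.trans
            (isub_congr L₁ rfl (by simp) (HEq.symm (cst_heq _ _)))))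
          (M.cst (by simp) t₂)
          ((cst_heq _ _).trans (ht₂.trans (HEq.symm (cst_heq _ _))))
          (M.cst (by simp)
            (isub (Γ ++ (objCtx L₁ [] ++ Λ)) L (s.tgt :: Γ') (M.cst (by simp) t₂)))
          (cst_heq _ _)
      case hp3 =>
        refine (cst_heq _ _).trans (ht₃.trans ?_)
        refine HEq.trans
          (isub_concat_heq (Γ ++ (objCtx L₁ [] ++ Λ)) L s Γ' t₂ (cst_heq (by simp) t₂)) ?_
        refine subst_congr (by simp) rfl ?_ s.hom
        exact (cst_heq _ _).trans (HEq.symm (cst_heq _ _))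
      exact isub_congr L₁ rfl (by simp) (cst_heq _ _)


end PreMulticat


open PreMulticat in
/-- for `t : Γ,A₁,…,A_j,Λ,A_{j+1},…,Aₙ,Γ' → B` and substitutions `uᵢ : Δᵢ → Aᵢ`
(the first `j` recorded as `L₁`, the rest as `L₂`) with `u₁,…,u_j` all central,
`t⟨Γ,u₁,…,u_j,Λ,A_{j+1},…,Aₙ,Γ'⟩⟨Γ,Δ₁,…,Δ_j,Λ,u_{j+1},…,uₙ,Γ'⟩
  = t⟨Γ,A₁,…,A_j,Λ,u_{j+1},…,uₙ,Γ'⟩⟨Γ,u₁,…,u_j,Λ,Δ_{j+1},…,Δₙ,Γ'⟩`. -/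
theorem stmt_17 (M : PreMulticat.{u, v}) (Γ Λ Γ' : List M.Obj) (L₁ L₂ : List M.Sub) {B : M.Obj}
    (t : M.Hom (Γ ++ objCtx L₁ (Λ ++ objCtx L₂ Γ')) B)
    (hc : ∀ s ∈ L₁, M.Central s.hom) :
    isub (Γ ++ (newCtx L₁ [] ++ Λ)) L₂ Γ'
        (M.cst (by simp) (isub Γ L₁ (Λ ++ objCtx L₂ Γ') t))
      = M.cst (by simp)
          (isub Γ L₁ (Λ ++ newCtx L₂ Γ')
            (M.cst (by simp)
              (isub (Γ ++ (objCtx L₁ [] ++ Λ)) L₂ Γ' (M.cst (by simp) t)))) := by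
  refine eq_of_heq (HEq.trans ?_ (HEq.symm (cst_heq _ _)))
  exact interchange Γ Λ L₁ hc L₂ Γ' t
    (M.cst (by simp) (isub Γ L₁ (Λ ++ objCtx L₂ Γ') t)) (cst_heq _ _)
    (M.cst (by simp) t) (cst_heq _ _)
    (M.cst (by simp) (isub (Γ ++ (objCtx L₁ [] ++ Λ)) L₂ Γ' (M.cst (by simp) t)))
    (cst_heq _ _)
end
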